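/- arXiv:2604.04124 — 2 statements merged into one kernel-verified Lean document; each statement's English description precedes it below -/
import Mathlib

section
/- Let r ≥ 1. In 𝔽_q[X_1,…,X_{r+1}] one has the congruence Π_{j=1}^{r} O_f^{(2)}(X_j, X_{r+1}) ≡ Σ_{k=0}^{n−1} D_f(X_1^k)·(Π_{j=1}^{r−1} O_f^{(2)}(X_j, X_r))·X_{r+1}^k modulo the ideal generated by f(X_1),…,f(X_{r+1}). In particular, the rank-(r+1) Weil operator O_f^{(r+1)} equals Σ_{k=0}^{n−1} [D_f(t^k) ∗ O_f^{(r)}]·X_{r+1}^k, and the coefficient of X_{r+1}^{n−1} in O_f^{(r+1)} is O_f^{(r)}. -/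
/-!
Since `O(a, c) · (X_a - X_c) = f(X_a) - f(X_c)`, modulo the ideal `I = (f(X_i))_i` a factor
`O(a, c)` allows replacing `X_a` by `X_c` in its cofactor. In `∏_{j ≤ r} O(X_j, X_{r+1})` the last
factor `O(X_r, X_{r+1})` turns the other factors into `∏_{j < r} O(X_j, X_r)`; this product
contains `O(X_1, X_r)`, which in turn turns `O(X_r, X_{r+1})` into `O(X_1, X_{r+1})`. Expanding
`O(X_1, X_{r+1})` in powers of `X_{r+1}` produces the coefficients `D_f(X_1^k)`.

For monic `f`, an element of `I` whose partial degrees are all `< deg f` vanishes: splitting off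
one variable, its image in `(R[X_2, …] ⧸ I')[X_1]` is a multiple of the monic `f(X_1)` of larger
degree, hence zero, so its coefficients lie in `I'` and induction applies. This pins down
`O_f^{(r+1)}` as the reduced right-hand side.
-/

open Finset MvPolynomial

/-- The rank-two Weil operator `O_g^{(2)}(X_a, X_b) = ∑_{j=1}^{deg g} b_j ∑_{α+β=j-1} X_a^α X_b^β`. -/
noncomputable def weilO2 {F : Type*} [Field F] {σ : Type*} (g : Polynomial F) (a b : σ) :
    MvPolynomial σ F :=
  ∑ j ∈ Finset.range g.natDegree,
    MvPolynomial.C (g.coeff (j + 1)) *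
      ∑ pr ∈ Finset.HasAntidiagonal.antidiagonal j, MvPolynomial.X a ^ pr.1 * MvPolynomial.X b ^ pr.2

theorem Polynomial.mem_map_C_of_mem_span_sup_of_natDegree_lt {A : Type*} [CommRing A]
    {J : Ideal A} {g q : Polynomial A} (hg : g.Monic)
    (hq : q ∈ Ideal.span {g} ⊔ J.map Polynomial.C) (hdeg : q.natDegree < g.natDegree) :
    q ∈ J.map Polynomial.C := by
  set φ := Polynomial.mapRingHom (Ideal.Quotient.mk J)
  have hker : RingHom.ker φ = J.map Polynomial.C := by
    rw [Polynomial.ker_mapRingHom, Ideal.mk_ker]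
  have hφq : φ g ∣ φ q := by
    have h := Ideal.mem_map_of_mem φ hq
    rwa [Ideal.map_sup, (Ideal.map_eq_bot_iff_le_ker φ).mpr hker.ge, sup_bot_eq, Ideal.map_span,
      Set.image_singleton, Ideal.mem_span_singleton] at h
  rw [← hker, RingHom.mem_ker]
  nontriviality (A ⧸ J)
  by_contra h0
  refine (hg.map _).not_dvd_of_natDegree_lt h0 ?_ hφq
  exact Polynomial.natDegree_map_le.trans_lt (hdeg.trans_eq (hg.natDegree_map _).symm)

noncomputable def evalIdeal {R : Type*} [CommRing R] (σ : Type*) (f : Polynomial R) :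
    Ideal (MvPolynomial σ R) :=
  Ideal.span (Set.range fun i : σ => Polynomial.aeval (X i : MvPolynomial σ R) f)

section EvalIdeal

variable {R σ τ : Type*} [CommRing R]

theorem aeval_X_mem_evalIdeal (f : Polynomial R) (i : σ) :
    Polynomial.aeval (X i : MvPolynomial σ R) f ∈ evalIdeal σ f :=
  Ideal.subset_span ⟨i, rfl⟩

theorem rename_mem_evalIdeal (f : Polynomial R) (r : σ → τ) {p : MvPolynomial σ R}
    (hp : p ∈ evalIdeal σ f) : rename r p ∈ evalIdeal τ f := by
  refine (Ideal.span_le.mpr ?_ : evalIdeal σ f ≤ (evalIdeal τ f).comap (rename r)) hp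
  rintro _ ⟨i, rfl⟩
  simpa [← Polynomial.aeval_algHom_apply] using aeval_X_mem_evalIdeal f (r i)

theorem X_sub_X_dvd_sub_rename_update [DecidableEq σ] (a c : σ) (p : MvPolynomial σ R) :
    X a - X c ∣ p - rename (Function.update id a c) p := by
  rw [← Ideal.mem_span_singleton, ← Ideal.Quotient.eq]
  set J := Ideal.span {(X a - X c : MvPolynomial σ R)}
  have h : Ideal.Quotient.mkₐ R J =
      (Ideal.Quotient.mkₐ R J).comp (rename (Function.update id a c)) := by
    refine MvPolynomial.algHom_ext fun i => ?_
    rw [AlgHom.comp_apply, rename_X]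
    rcases eq_or_ne i a with rfl | hi
    · simpa using Ideal.Quotient.eq.mpr (Ideal.mem_span_singleton_self _)
    · simp [Function.update_of_ne hi]
  exact congr($h p)

theorem finSuccEquiv_mem_span_sup_map_C {f : Polynomial R} {s : ℕ}
    {P : MvPolynomial (Fin (s + 1)) R} (hP : P ∈ evalIdeal (Fin (s + 1)) f) :
    finSuccEquiv R s P ∈
      Ideal.span {f.map (algebraMap R _)} ⊔ (evalIdeal (Fin s) f).map Polynomial.C := by
  refine Ideal.mem_comap.mp
    ((Ideal.span_le.mpr ?_ : evalIdeal _ f ≤ Ideal.comap (finSuccEquiv R s) _) hP)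
  rintro _ ⟨i, rfl⟩
  rw [SetLike.mem_coe, Ideal.mem_comap, ← Polynomial.aeval_algHom_apply]
  refine Fin.cases ?_ (fun j => ?_) i
  · rw [finSuccEquiv_X_zero]
    exact Ideal.mem_sup_left (Ideal.mem_span_singleton_self _)
  · rw [finSuccEquiv_X_succ, ← Polynomial.CAlgHom_apply (R := R), Polynomial.aeval_algHom_apply]
    exact Ideal.mem_sup_right (Ideal.mem_map_of_mem _ (aeval_X_mem_evalIdeal f j))

theorem eq_zero_of_mem_evalIdeal_of_degreeOf_lt {f : Polynomial R} (hf : f.Monic) :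
    ∀ {s : ℕ} {P : MvPolynomial (Fin s) R}, P ∈ evalIdeal (Fin s) f →
      (∀ v, degreeOf v P < f.natDegree) → P = 0
  | 0, P, hP, _ => by simpa [evalIdeal] using hP
  | s + 1, P, hP, hdeg => by
    nontriviality R
    have hmem : finSuccEquiv R s P ∈ (evalIdeal (Fin s) f).map Polynomial.C :=
      Polynomial.mem_map_C_of_mem_span_sup_of_natDegree_lt (hf.map _)
        (finSuccEquiv_mem_span_sup_map_C hP)
        (by rw [natDegree_finSuccEquiv, hf.natDegree_map]; exact hdeg 0)
    have hcoeff (k : ℕ) : (finSuccEquiv R s P).coeff k = 0 :=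
      eq_zero_of_mem_evalIdeal_of_degreeOf_lt hf (Ideal.mem_map_C_iff.mp hmem k)
        fun v => (degreeOf_coeff_finSuccEquiv P v k).trans_lt (hdeg v.succ)
    exact (finSuccEquiv R s).injective (by ext k; simp [hcoeff])

theorem eq_of_sub_mem_evalIdeal_of_degreeOf_lt {f : Polynomial R} (hf : f.Monic) {s : ℕ}
    {P Q : MvPolynomial (Fin s) R} (hPQ : P - Q ∈ evalIdeal (Fin s) f)
    (hP : ∀ v, degreeOf v P < f.natDegree) (hQ : ∀ v, degreeOf v Q < f.natDegree) : P = Q :=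
  sub_eq_zero.mp <| eq_zero_of_mem_evalIdeal_of_degreeOf_lt hf hPQ fun v =>
    (degreeOf_sub_le v P Q).trans_lt (max_lt (hP v) (hQ v))

end EvalIdeal

section DegreeOf

variable {R σ τ : Type*} [CommRing R]

theorem degreeOf_rename_eq_zero_of_notMem_range {r : σ → τ} {i : τ} (hi : i ∉ Set.range r)
    (p : MvPolynomial σ R) : degreeOf i (rename r p) = 0 := by
  classical
  rw [degreeOf_def, Multiset.count_eq_zero]
  intro h
  obtain ⟨w, -, rfl⟩ := Multiset.mem_map.mp (degrees_rename r p h)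
  exact hi ⟨w, rfl⟩

theorem degreeOf_rename_castSucc_mul_X_last_pow_lt [Nontrivial R] {s d k : ℕ}
    {p : MvPolynomial (Fin s) R} (hp : ∀ w, degreeOf w p < d) (hk : k < d) (v : Fin (s + 1)) :
    degreeOf v (rename Fin.castSucc p * X (Fin.last s) ^ k) < d := by
  induction v using Fin.lastCases with
  | last =>
    have hren : degreeOf (Fin.last s) (rename Fin.castSucc p) = 0 :=
      degreeOf_rename_eq_zero_of_notMem_range (by simp) p
    have hX := degreeOf_pow_le (Fin.last s) (X (Fin.last s) : MvPolynomial (Fin (s + 1)) R) k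
    rw [degreeOf_X_self, mul_one] at hX
    have := degreeOf_mul_le (Fin.last s) (rename Fin.castSucc p) (X (Fin.last s) ^ k)
    omega
  | cast w =>
    rw [degreeOf_mul_X_pow_of_ne _ (Fin.castSucc_lt_last w).ne,
      degreeOf_rename_of_injective (Fin.castSucc_injective _)]
    exact hp w

theorem degreeOf_sum_rename_castSucc_mul_X_last_pow_lt [Nontrivial R] {s d : ℕ} (hd : 0 < d)
    {T : ℕ → MvPolynomial (Fin s) R} (hT : ∀ k < d, ∀ w, degreeOf w (T k) < d)
    (v : Fin (s + 1)) :
    degreeOf v (∑ k ∈ range d, rename Fin.castSucc (T k) * X (Fin.last s) ^ k) < d :=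
  (degreeOf_sum_le _ _ _).trans_lt <| (Finset.sup_lt_iff hd).mpr fun k hk =>
    degreeOf_rename_castSucc_mul_X_last_pow_lt (hT k (mem_range.mp hk)) (mem_range.mp hk) v

end DegreeOf

section Weil

variable {F σ τ : Type*} [Field F]

/-- `D_f(X_a^k)`. -/
noncomputable def dualXPow (f : Polynomial F) (a : σ) (k : ℕ) : MvPolynomial σ F :=
  ∑ j ∈ range (f.natDegree - k), C (f.coeff (k + j + 1)) * X a ^ j

theorem rename_dualXPow (f : Polynomial F) (r : σ → τ) (a : σ) (k : ℕ) :
    rename r (dualXPow f a k) = dualXPow f (r a) k := by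
  simp [dualXPow]

theorem rename_weilO2 (f : Polynomial F) (r : σ → τ) (a b : σ) :
    rename r (weilO2 f a b) = weilO2 f (r a) (r b) := by
  simp [weilO2]

theorem weilO2_comm (f : Polynomial F) (a b : σ) : weilO2 f a b = weilO2 f b a := by
  unfold weilO2
  refine Finset.sum_congr rfl fun j _ => ?_
  rw [← Finset.Nat.sum_antidiagonal_swap]
  simp only [Prod.fst_swap, Prod.snd_swap, mul_comm]

theorem weilO2_eq_sum_dualXPow_mul_X_pow (f : Polynomial F) (a b : σ) :
    weilO2 f a b = ∑ k ∈ range f.natDegree, dualXPow f a k * X b ^ k := by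
  simp only [weilO2, dualXPow, Finset.Nat.sum_antidiagonal_eq_sum_range_succ_mk, Finset.mul_sum,
    Finset.sum_mul]
  rw [Finset.sum_sigma', Finset.sum_sigma']
  refine Finset.sum_nbij' (fun p => ⟨p.1 - p.2, p.2⟩) (fun p => ⟨p.1 + p.2, p.2⟩) ?_ ?_ ?_ ?_ ?_ <;>
    rintro ⟨j, i⟩ h <;>
    simp only [Finset.mem_sigma, Finset.mem_range, Sigma.mk.inj_iff, heq_eq_eq, and_true] at h ⊢
  any_goals omega
  rw [Nat.sub_add_cancel (Nat.lt_succ_iff.mp h.2), mul_assoc]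

theorem sum_dualXPow_mul_mul_X_pow (f : Polynomial F) (a b : σ) (p : MvPolynomial σ F) :
    ∑ k ∈ range f.natDegree, dualXPow f a k * p * X b ^ k = weilO2 f a b * p := by
  rw [weilO2_eq_sum_dualXPow_mul_X_pow, Finset.sum_mul]
  exact Finset.sum_congr rfl fun k _ => by ring

theorem weilO2_mul_X_sub_X (f : Polynomial F) (a b : σ) :
    weilO2 f a b * (X a - X b) =
      Polynomial.aeval (X a : MvPolynomial σ F) f - Polynomial.aeval (X b : MvPolynomial σ F) f := by
  rw [Polynomial.aeval_eq_sum_range, Polynomial.aeval_eq_sum_range, ← Finset.sum_sub_distrib,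
    Finset.sum_range_succ', pow_zero, pow_zero, sub_self, add_zero, weilO2, Finset.sum_mul]
  refine Finset.sum_congr rfl fun j _ => ?_
  rw [smul_eq_C_mul, smul_eq_C_mul, ← mul_sub, mul_assoc,
    Finset.Nat.sum_antidiagonal_eq_sum_range_succ_mk, ← geom_sum₂_mul]
  rfl

theorem weilO2_mul_sub_rename_update_mem [DecidableEq σ] (f : Polynomial F) (a c : σ)
    (p : MvPolynomial σ F) :
    weilO2 f a c * (p - rename (Function.update id a c) p) ∈ evalIdeal σ f := by
  obtain ⟨s, hs⟩ := X_sub_X_dvd_sub_rename_update a c p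
  rw [hs, ← mul_assoc, weilO2_mul_X_sub_X, sub_mul]
  exact Ideal.sub_mem _ (Ideal.mul_mem_right _ _ (aeval_X_mem_evalIdeal f a))
    (Ideal.mul_mem_right _ _ (aeval_X_mem_evalIdeal f c))

theorem weilO2_mul_weilO2_sub_mem [DecidableEq σ] (f : Polynomial F) {a b c : σ} (hb : b ≠ a) :
    weilO2 f a c * weilO2 f a b - weilO2 f a c * weilO2 f c b ∈ evalIdeal σ f := by
  have h := weilO2_mul_sub_rename_update_mem f a c (weilO2 f a b)
  rwa [rename_weilO2, Function.update_self, Function.update_of_ne hb, id, mul_sub] at h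

end Weil

section Recursion

variable {F : Type*} [Field F]

theorem prod_weilO2_sub_weilO2_mul_prod_mem (f : Polynomial F) (m : ℕ) :
    ∏ j : Fin (m + 1), weilO2 f j.castSucc (Fin.last (m + 1))
      - weilO2 f (Fin.last m).castSucc (Fin.last (m + 1)) *
        ∏ j : Fin m, weilO2 f j.castSucc.castSucc (Fin.last m).castSucc
      ∈ evalIdeal (Fin (m + 2)) f := by
  have h := weilO2_mul_sub_rename_update_mem f (Fin.last (m + 1)) (Fin.last m).castSucc
    (∏ j : Fin m, weilO2 f j.castSucc.castSucc (Fin.last (m + 1)))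
  simp only [map_prod, rename_weilO2, Function.update_self,
    Function.update_of_ne (Fin.castSucc_lt_last _).ne, id] at h
  rw [weilO2_comm, mul_sub] at h
  rwa [Fin.prod_univ_castSucc, mul_comm (∏ _, _)]

theorem weilO2_mul_prod_sub_weilO2_zero_mul_prod_mem (f : Polynomial F) (m : ℕ) :
    weilO2 f (Fin.last m).castSucc (Fin.last (m + 1)) *
        ∏ j : Fin m, weilO2 f j.castSucc.castSucc (Fin.last m).castSucc
      - weilO2 f 0 (Fin.last (m + 1)) *
        ∏ j : Fin m, weilO2 f j.castSucc.castSucc (Fin.last m).castSucc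
      ∈ evalIdeal (Fin (m + 2)) f := by
  cases m with
  | zero =>
    rw [show (Fin.last 0).castSucc = (0 : Fin 2) from rfl, sub_self]
    exact zero_mem _
  | succ k =>
    have h := weilO2_mul_weilO2_sub_mem f (a := (Fin.last (k + 1)).castSucc) (c := 0)
      (Fin.castSucc_lt_last _).ne'
    rw [Fin.prod_univ_succ, Fin.castSucc_zero, Fin.castSucc_zero,
      weilO2_comm f 0 (Fin.last (k + 1)).castSucc, ← mul_assoc, ← mul_assoc, ← sub_mul,
      mul_comm (weilO2 f _ (Fin.last _)), mul_comm (weilO2 f 0 _)]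
    exact Ideal.mul_mem_right _ _ h

theorem prod_weilO2_sub_sum_dualXPow_mem (f : Polynomial F) (m : ℕ) :
    ∏ j : Fin (m + 1), weilO2 f j.castSucc (Fin.last (m + 1))
      - ∑ k ∈ range f.natDegree, dualXPow f 0 k *
          (∏ j : Fin m, weilO2 f j.castSucc.castSucc (Fin.last m).castSucc) *
          X (Fin.last (m + 1)) ^ k
      ∈ evalIdeal (Fin (m + 2)) f := by
  rw [sum_dualXPow_mul_mul_X_pow]
  simpa only [sub_add_sub_cancel] using add_mem (prod_weilO2_sub_weilO2_mul_prod_mem f m)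
    (weilO2_mul_prod_sub_weilO2_zero_mul_prod_mem f m)

theorem sum_rename_castSucc_sub_sum_dualXPow_mem (f : Polynomial F) (m : ℕ)
    {T : ℕ → MvPolynomial (Fin (m + 1)) F}
    (hT : ∀ k < f.natDegree,
      T k - dualXPow f 0 k * ∏ j : Fin m, weilO2 f j.castSucc (Fin.last m)
        ∈ evalIdeal (Fin (m + 1)) f) :
    ∑ k ∈ range f.natDegree, rename Fin.castSucc (T k) * X (Fin.last (m + 1)) ^ k
      - ∑ k ∈ range f.natDegree, dualXPow f 0 k *
          (∏ j : Fin m, weilO2 f j.castSucc.castSucc (Fin.last m).castSucc) *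
          X (Fin.last (m + 1)) ^ k
      ∈ evalIdeal (Fin (m + 2)) f := by
  rw [← Finset.sum_sub_distrib]
  refine sum_mem fun k hk => ?_
  have h := rename_mem_evalIdeal f Fin.castSucc (hT k (mem_range.mp hk))
  simp only [map_sub, map_mul, map_prod, rename_dualXPow, rename_weilO2, Fin.castSucc_zero] at h
  rw [← sub_mul]
  exact Ideal.mul_mem_right _ _ h

end Recursion

theorem weil_operator_recursive_general {F : Type*} [Field F]
    (f : Polynomial F) (hf : f.Monic) (n : ℕ) (hn : f.natDegree = n)
    (m : ℕ)
    (Q : MvPolynomial (Fin (m + 2)) F)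
    (hQdeg : ∀ v : Fin (m + 2), MvPolynomial.degreeOf v Q < n)
    (hQ : Q - (∏ j : Fin (m + 1), weilO2 f (Fin.castSucc j) (Fin.last (m + 1)))
      ∈ Ideal.span (Set.range fun i : Fin (m + 2) =>
          Polynomial.aeval (MvPolynomial.X i : MvPolynomial (Fin (m + 2)) F) f))
    (T : ℕ → MvPolynomial (Fin (m + 1)) F)
    (hTdeg : ∀ k < n, ∀ v : Fin (m + 1), MvPolynomial.degreeOf v (T k) < n)
    (hT : ∀ k < n, T k -
        (∑ j ∈ Finset.range (n - k),
            MvPolynomial.C (f.coeff (k + j + 1)) * MvPolynomial.X (0 : Fin (m + 1)) ^ j)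
          * (∏ j : Fin m, weilO2 f (Fin.castSucc j) (Fin.last m))
      ∈ Ideal.span (Set.range fun i : Fin (m + 1) =>
          Polynomial.aeval (MvPolynomial.X i : MvPolynomial (Fin (m + 1)) F) f)) :
    ((∏ j : Fin (m + 1), weilO2 f (Fin.castSucc j) (Fin.last (m + 1)))
        - (∑ k ∈ Finset.range n,
            (∑ j ∈ Finset.range (n - k),
                MvPolynomial.C (f.coeff (k + j + 1)) * MvPolynomial.X (0 : Fin (m + 2)) ^ j)
              * (∏ j : Fin m, weilO2 f (Fin.castSucc (Fin.castSucc j))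
                  (Fin.castSucc (Fin.last m)))
              * MvPolynomial.X (Fin.last (m + 1)) ^ k)
        ∈ Ideal.span (Set.range fun i : Fin (m + 2) =>
            Polynomial.aeval (MvPolynomial.X i : MvPolynomial (Fin (m + 2)) F) f))
    ∧ (Q = ∑ k ∈ Finset.range n,
        MvPolynomial.rename Fin.castSucc (T k) * MvPolynomial.X (Fin.last (m + 1)) ^ k) := by
  subst hn
  have hcongr := prod_weilO2_sub_sum_dualXPow_mem f m
  refine ⟨hcongr, eq_of_sub_mem_evalIdeal_of_degreeOf_lt hf ?_ hQdeg
    (degreeOf_sum_rename_castSucc_mul_X_last_pow_lt (Nat.zero_lt_of_lt (hQdeg 0)) hTdeg)⟩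
  have h := sub_mem (add_mem hQ hcongr) (sum_rename_castSucc_sub_sum_dualXPow_mem f m hT)
  rwa [sub_add_sub_cancel, sub_sub_sub_cancel_right] at h

/-- Let `r = m + 1 ≥ 1`.  In `𝔽_q[X_1,…,X_{r+1}]` one has
`∏_{j=1}^{r} O_f^{(2)}(X_j, X_{r+1})
  ≡ ∑_{k=0}^{n-1} D_f(X_1^k)·(∏_{j=1}^{r-1} O_f^{(2)}(X_j, X_r))·X_{r+1}^k`
modulo the ideal generated by `f(X_1),…,f(X_{r+1})`.  In particular, the rank-(r+1) Weil
operator `O_f^{(r+1)}` (the unique representative `Q` with all partial degrees `< n`) equals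
`∑_{k=0}^{n-1} [D_f(t^k) ∗ O_f^{(r)}]·X_{r+1}^k`, where `[D_f(t^k) ∗ O_f^{(r)}]` is the unique
representative `T k` with partial degrees `< n`; hence the coefficient of `X_{r+1}^{n-1}` in
`O_f^{(r+1)}` is `O_f^{(r)} = T (n-1)`. -/
theorem weil_operator_recursive {F : Type*} [Field F] [Fintype F]
    (f : Polynomial F) (hf : f.Monic) (n : ℕ) (hn : f.natDegree = n) (hn1 : 1 ≤ n)
    (m : ℕ)
    (Q : MvPolynomial (Fin (m + 2)) F)
    (hQdeg : ∀ v : Fin (m + 2), MvPolynomial.degreeOf v Q < n)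
    (hQ : Q - (∏ j : Fin (m + 1), weilO2 f (Fin.castSucc j) (Fin.last (m + 1)))
      ∈ Ideal.span (Set.range fun i : Fin (m + 2) =>
          Polynomial.aeval (MvPolynomial.X i : MvPolynomial (Fin (m + 2)) F) f))
    (T : ℕ → MvPolynomial (Fin (m + 1)) F)
    (hTdeg : ∀ k < n, ∀ v : Fin (m + 1), MvPolynomial.degreeOf v (T k) < n)
    (hT : ∀ k < n, T k -
        (∑ j ∈ Finset.range (n - k),
            MvPolynomial.C (f.coeff (k + j + 1)) * MvPolynomial.X (0 : Fin (m + 1)) ^ j)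
          * (∏ j : Fin m, weilO2 f (Fin.castSucc j) (Fin.last m))
      ∈ Ideal.span (Set.range fun i : Fin (m + 1) =>
          Polynomial.aeval (MvPolynomial.X i : MvPolynomial (Fin (m + 1)) F) f)) :
    ((∏ j : Fin (m + 1), weilO2 f (Fin.castSucc j) (Fin.last (m + 1)))
        - (∑ k ∈ Finset.range n,
            (∑ j ∈ Finset.range (n - k),
                MvPolynomial.C (f.coeff (k + j + 1)) * MvPolynomial.X (0 : Fin (m + 2)) ^ j)
              * (∏ j : Fin m, weilO2 f (Fin.castSucc (Fin.castSucc j))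
                  (Fin.castSucc (Fin.last m)))
              * MvPolynomial.X (Fin.last (m + 1)) ^ k)
        ∈ Ideal.span (Set.range fun i : Fin (m + 2) =>
            Polynomial.aeval (MvPolynomial.X i : MvPolynomial (Fin (m + 2)) F) f))
    ∧ (Q = ∑ k ∈ Finset.range n,
        MvPolynomial.rename Fin.castSucc (T k) * MvPolynomial.X (Fin.last (m + 1)) ^ k) :=
  weil_operator_recursive_general f hf n hn m Q hQdeg hQ T hTdeg hT
end

section
/- Suppose f = (t − ζ)·m with ζ ∈ 𝔽_q and m ∈ 𝔽_q[t] monic. Let r ≥ 2 and l ∈ {1,…,r−1}. Then, modulo the ideal of 𝔽_q[X_1,…,X_r] generated by f(X_1),…,f(X_r), one has Π_{j=1}^{r−1} O_f^{(2)}(X_j, X_r) ≡ m(X_l)·Π_{j∈{1,…,r−1}, j≠l} O_f^{(2)}(X_j, X_r) + (Π_{j∈{1,…,r}, j≠l} (X_j − ζ))·Π_{j=1}^{r−1} O_m^{(2)}(X_j, X_r); that is, the rank-r Weil operators satisfy O_f^{(r)}(X_1,…,X_r) = m(X_l)·O_f^{(r−1)}(X_1,…,X̂_l,…,X_r) + Π_{j≠l}(X_j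 − ζ)·O_m^{(r)}(X_1,…,X_r). -/
/-!
Cancelling `X_a - X_b` in `(X_a - X_b) · O_f(X_a, X_b) = f(X_a) - f(X_b)` splits the Weil operator of
`f = (t - ζ) m` in two ways: `O_f(X_a, X_b) = m(X_a) + (X_b - ζ) O_m(X_a, X_b)
= m(X_b) + (X_a - ζ) O_m(X_a, X_b)`. Use the first splitting for the factor `j = l` and the second
for the others. Modulo `m(X_r)` the product of the others is `∏_{j ≠ l} (X_j - ζ) O_m(X_j, X_r)`,
and the error is multiplied by `X_r - ζ`, so it is a multiple of `f(X_r)`.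
-/

open Finset MvPolynomial

theorem Finset.dvd_prod_add_sub_prod {R ι : Type*} [CommRing R] (s : Finset ι) (c : R)
    (a : ι → R) : c ∣ (∏ j ∈ s, (c + a j)) - ∏ j ∈ s, a j := by
  rw [← Ideal.mem_span_singleton, ← Ideal.Quotient.eq]
  simp [map_prod]

theorem Fin.prod_univ_erase_castSucc {M : Type*} [CommMonoid M] {n : ℕ} (f : Fin (n + 1) → M)
    (i : Fin n) :
    ∏ j ∈ univ.erase i.castSucc, f j = (∏ j ∈ univ.erase i, f j.castSucc) * f (Fin.last n) := by
  have h := prod_update_of_mem (mem_univ i.castSucc) f 1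
  have h' := prod_update_of_mem (mem_univ i) (fun j => f j.castSucc) 1
  rw [one_mul, sdiff_singleton_eq_erase] at h h'
  rw [← h, Fin.prod_univ_castSucc, ← h']
  simp [Function.update_apply, (Fin.castSucc_lt_last i).ne']

theorem mul_dvd_prod_sub_of_eq_add {R ι : Type*} [CommRing R] [DecidableEq ι] {s : Finset ι}
    {l : ι} (hl : l ∈ s) {P Q Y : ι → R} {a b c : R} (hPl : P l = a + c * Q l)
    (hP : ∀ j ∈ s.erase l, P j = b + Y j * Q j) :
    c * b ∣ ∏ j ∈ s, P j
      - (a * ∏ j ∈ s.erase l, P j + (∏ j ∈ s.erase l, Y j) * c * ∏ j ∈ s, Q j) := by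
  obtain ⟨q, hq⟩ := (s.erase l).dvd_prod_add_sub_prod b (fun j => Y j * Q j)
  rw [prod_mul_distrib] at hq
  rw [← mul_prod_erase s P hl, ← mul_prod_erase s Q hl, hPl, prod_congr rfl hP]
  exact ⟨Q l * q, by linear_combination c * Q l * hq⟩

section weilO2

variable {F σ : Type*} [Field F] {a b : σ}

theorem X_sub_X_mul_weilO2 (g : Polynomial F) (a b : σ) :
    (X a - X b) * weilO2 g a b = Polynomial.aeval (X a : MvPolynomial σ F) g
      - Polynomial.aeval (X b : MvPolynomial σ F) g := by
  rw [weilO2, Polynomial.aeval_eq_sum_range, Polynomial.aeval_eq_sum_range, ← sum_sub_distrib,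
    sum_range_succ', pow_zero, pow_zero, sub_self, add_zero, mul_sum]
  refine sum_congr rfl fun j _ => ?_
  rw [Nat.sum_antidiagonal_eq_sum_range_succ_mk, ← smul_sub, smul_eq_C_mul,
    ← geom_sum₂_mul, Nat.add_sub_cancel]
  ring

theorem weilO2_eq_of_X_sub_X_mul (hab : a ≠ b) {g : Polynomial F} {p : MvPolynomial σ F}
    (h : (X a - X b) * p = Polynomial.aeval (X a : MvPolynomial σ F) g
      - Polynomial.aeval (X b : MvPolynomial σ F) g) :
    weilO2 g a b = p :=
  mul_left_cancel₀ (sub_ne_zero.mpr fun h => hab (X_injective h))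
    ((X_sub_X_mul_weilO2 g a b).trans h.symm)

theorem weilO2_X_sub_C_mul_left (hab : a ≠ b) (ζ : F) (m : Polynomial F) :
    weilO2 ((Polynomial.X - Polynomial.C ζ) * m) a b
      = Polynomial.aeval (X a : MvPolynomial σ F) m + (X b - C ζ) * weilO2 m a b := by
  refine weilO2_eq_of_X_sub_X_mul hab ?_
  simp only [map_mul, map_sub, Polynomial.aeval_X, Polynomial.aeval_C, algebraMap_eq]
  linear_combination (X b - C ζ) * X_sub_X_mul_weilO2 m a b

theorem weilO2_X_sub_C_mul_right (hab : a ≠ b) (ζ : F) (m : Polynomial F) :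
    weilO2 ((Polynomial.X - Polynomial.C ζ) * m) a b
      = Polynomial.aeval (X b : MvPolynomial σ F) m + (X a - C ζ) * weilO2 m a b := by
  refine weilO2_eq_of_X_sub_X_mul hab ?_
  simp only [map_mul, map_sub, Polynomial.aeval_X, Polynomial.aeval_C, algebraMap_eq]
  linear_combination (X a - C ζ) * X_sub_X_mul_weilO2 m a b

end weilO2

theorem weil_operator_katen_recursion_general {F : Type*} [Field F]
    (ζ : F) (mm : Polynomial F)
    (s : ℕ) (l : Fin (s + 1)) :
    (∏ j : Fin (s + 1),
        weilO2 ((Polynomial.X - Polynomial.C ζ) * mm) (Fin.castSucc j) (Fin.last (s + 1)))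
      - (Polynomial.aeval (MvPolynomial.X (Fin.castSucc l) : MvPolynomial (Fin (s + 2)) F) mm
          * ∏ j ∈ Finset.univ.erase l,
              weilO2 ((Polynomial.X - Polynomial.C ζ) * mm) (Fin.castSucc j) (Fin.last (s + 1))
        + (∏ j ∈ Finset.univ.erase (Fin.castSucc l),
            (MvPolynomial.X j - MvPolynomial.C ζ : MvPolynomial (Fin (s + 2)) F))
          * ∏ j : Fin (s + 1), weilO2 mm (Fin.castSucc j) (Fin.last (s + 1)))
      ∈ Ideal.span (Set.range fun i : Fin (s + 2) =>
          Polynomial.aeval (MvPolynomial.X i : MvPolynomial (Fin (s + 2)) F)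
            ((Polynomial.X - Polynomial.C ζ) * mm)) := by
  have hne (j : Fin (s + 1)) : j.castSucc ≠ Fin.last (s + 1) := (Fin.castSucc_lt_last j).ne
  have hdvd := mul_dvd_prod_sub_of_eq_add (mem_univ l)
    (weilO2_X_sub_C_mul_left (hne l) ζ mm) fun j _ => weilO2_X_sub_C_mul_right (hne j) ζ mm
  have hf : (X (Fin.last (s + 1)) - C ζ) * Polynomial.aeval (X (Fin.last (s + 1))) mm
      = Polynomial.aeval (X (Fin.last (s + 1)) : MvPolynomial (Fin (s + 2)) F)
          ((Polynomial.X - Polynomial.C ζ) * mm) := by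
    simp
  rw [Fin.prod_univ_erase_castSucc]
  exact Ideal.mem_of_dvd _ (hf ▸ hdvd) (Ideal.subset_span ⟨_, rfl⟩)

/-- Suppose `f = (t − ζ)·m` with `ζ ∈ 𝔽_q` and `m` monic, let `r = s + 2 ≥ 2`
and `l ∈ {1,…,r-1}`.  Then, modulo the ideal generated by `f(X_1),…,f(X_r)`,
`∏_{j=1}^{r-1} O_f^{(2)}(X_j, X_r)
  ≡ m(X_l)·∏_{j≠l, j<r} O_f^{(2)}(X_j, X_r)
    + (∏_{j≠l} (X_j − ζ))·∏_{j=1}^{r-1} O_m^{(2)}(X_j, X_r)`;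
that is, the rank-`r` Weil operators satisfy Katen's recursion
`O_f^{(r)} = m(X_l)·O_f^{(r-1)}(X_1,…,X̂_l,…,X_r) + ∏_{j≠l}(X_j − ζ)·O_m^{(r)}`. -/
theorem weil_operator_katen_recursion {F : Type*} [Field F] [Fintype F]
    (ζ : F) (mm : Polynomial F) (hm : mm.Monic)
    (s : ℕ) (l : Fin (s + 1)) :
    (∏ j : Fin (s + 1),
        weilO2 ((Polynomial.X - Polynomial.C ζ) * mm) (Fin.castSucc j) (Fin.last (s + 1)))
      - (Polynomial.aeval (MvPolynomial.X (Fin.castSucc l) : MvPolynomial (Fin (s + 2)) F) mm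
          * ∏ j ∈ Finset.univ.erase l,
              weilO2 ((Polynomial.X - Polynomial.C ζ) * mm) (Fin.castSucc j) (Fin.last (s + 1))
        + (∏ j ∈ Finset.univ.erase (Fin.castSucc l),
            (MvPolynomial.X j - MvPolynomial.C ζ : MvPolynomial (Fin (s + 2)) F))
          * ∏ j : Fin (s + 1), weilO2 mm (Fin.castSucc j) (Fin.last (s + 1)))
      ∈ Ideal.span (Set.range fun i : Fin (s + 2) =>
          Polynomial.aeval (MvPolynomial.X i : MvPolynomial (Fin (s + 2)) F)
            ((Polynomial.X - Polynomial.C ζ) * mm)) :=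
  weil_operator_katen_recursion_general ζ mm s l
end
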